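/- Let F be a finite field with |F| = q ≥ 2 and let p ∈ [0,1] be a real number. Consider the weighted sum over all pairs (k, ε) with k = (a,b,c,d,k13,k14,k47,k78,k25,k57) ∈ F^10 and ε = (ε1,ε2,ε3,ε4,ε5,ε7,ε8) ∈ Bool^7, where each pair has weight q^{-10} · ∏_i w(ε_i) with w(true) = 1−p and w(false) = p. Then the total weight of pairs for which the erased decoding matrix F̃_{t1} (with columns f̃3 and f̃8, where f̃1 = (a,b) if ε1 else 0, f̃2 = (c,d) if ε2 else 0, f̃3 = k13·f̃1 if ε3 else 0, f̃4 = k14·f̃1 if ε4 else 0, f̃5 = k25·f̃2 if ε5 else 0, f̃7 = k47·f̃4 + k57·f̃5 if ε7 else 0, f̃8 = k78·f̃7 if ε8 else 0) is invertible equals (q+1)(q-1)^6(1−p)^6/q^7. Hence the failure probability of sink t1 with channel failure probability p is P̃_e(t1) = 1 − (q+1)(q-1)^6(1−p)^6/q^7. -/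

import Mathlib

/-!
Expanding the 2×2 determinant, `det F̃_{t1} = ε1 ε2 ε3 ε5 ε7 ε8 · k13 k78 k25 k57 (ad - bc)`:
the `e4`-branch of `f̃8` is a multiple of `(a, b)`, parallel to `f̃3`, so it drops out. Hence the
weight of the invertible configurations factors into a count of coefficient tuples, `|GL₂(F)|`
choices of `(a, b, c, d)`, `q - 1` for each of `k13, k78, k25, k57` and `q` for each of `k14, k47`,
times the probability `(1 - p)^6` that the six channels other than `e4` succeed; and
`(q² - 1)(q² - q)(q - 1)⁴ q² / q¹⁰ = (q + 1)(q - 1)⁶ / q⁷`. The failure weight is the complement,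
the total weight being `1`.
-/

/- Active global encoding kernels of the butterfly network with channel erasures:
`fᵢt` is the usual linear-combination value when the Boolean `eᵢ` (channel `eᵢ`
successful) is true, and the zero vector otherwise. The source kernel is
`K_s = [[a,c],[b,d]]`, i.e. `f1 = (a,b)ᵀ`, `f2 = (c,d)ᵀ`. -/

def f1t {F : Type*} [Field F] (a b : F) (e1 : Bool) : Fin 2 → F :=
  if e1 then ![a, b] else 0

def f2t {F : Type*} [Field F] (c d : F) (e2 : Bool) : Fin 2 → F :=
  if e2 then ![c, d] else 0

def f3t {F : Type*} [Field F] (a b k13 : F) (e1 e3 : Bool) : Fin 2 → F :=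
  if e3 then k13 • f1t a b e1 else 0

def f4t {F : Type*} [Field F] (a b k14 : F) (e1 e4 : Bool) : Fin 2 → F :=
  if e4 then k14 • f1t a b e1 else 0

def f5t {F : Type*} [Field F] (c d k25 : F) (e2 e5 : Bool) : Fin 2 → F :=
  if e5 then k25 • f2t c d e2 else 0

def f6t {F : Type*} [Field F] (c d k26 : F) (e2 e6 : Bool) : Fin 2 → F :=
  if e6 then k26 • f2t c d e2 else 0

def f7t {F : Type*} [Field F] (a b c d k14 k47 k25 k57 : F) (e1 e2 e4 e5 e7 : Bool) :
    Fin 2 → F :=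
  if e7 then k47 • f4t a b k14 e1 e4 + k57 • f5t c d k25 e2 e5 else 0

def f8t {F : Type*} [Field F] (a b c d k14 k47 k78 k25 k57 : F) (e1 e2 e4 e5 e7 e8 : Bool) :
    Fin 2 → F :=
  if e8 then k78 • f7t a b c d k14 k47 k25 k57 e1 e2 e4 e5 e7 else 0

def f9t {F : Type*} [Field F] (a b c d k14 k47 k79 k25 k57 : F) (e1 e2 e4 e5 e7 e9 : Bool) :
    Fin 2 → F :=
  if e9 then k79 • f7t a b c d k14 k47 k25 k57 e1 e2 e4 e5 e7 else 0

/- The erased decoding matrix at sink `t₁`: columns `f̃3` and `f̃8`. -/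
def Ft1t {F : Type*} [Field F] (a b c d k13 k14 k47 k78 k25 k57 : F)
    (e1 e2 e3 e4 e5 e7 e8 : Bool) : Matrix (Fin 2) (Fin 2) F :=
  !![f3t a b k13 e1 e3 0, f8t a b c d k14 k47 k78 k25 k57 e1 e2 e4 e5 e7 e8 0;
     f3t a b k13 e1 e3 1, f8t a b c d k14 k47 k78 k25 k57 e1 e2 e4 e5 e7 e8 1]

/- The erased decoding matrix at sink `t₂`: columns `f̃6` and `f̃9`. -/
def Ft2t {F : Type*} [Field F] (a b c d k14 k47 k79 k25 k57 k26 : F)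
    (e1 e2 e4 e5 e6 e7 e9 : Bool) : Matrix (Fin 2) (Fin 2) F :=
  !![f6t c d k26 e2 e6 0, f9t a b c d k14 k47 k79 k25 k57 e1 e2 e4 e5 e7 e9 0;
     f6t c d k26 e2 e6 1, f9t a b c d k14 k47 k79 k25 k57 e1 e2 e4 e5 e7 e9 1]

open Finset

-- The decidability of the condition is an argument so that the lemma also applies to the
-- instance `Nat.decidableForallFin` that is found when `ι = Fin n`.
theorem Fintype.sum_pi_ite_forall_mem {ι β R : Type*} [Fintype ι] [DecidableEq ι] [Fintype β]
    [CommSemiring R] (S : Finset ι) (P : β → Prop) [DecidablePred P]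
    [∀ x : ι → β, Decidable (∀ i ∈ S, P (x i))] (f : β → R) :
    ∑ x : ι → β, (if ∀ i ∈ S, P (x i) then ∏ i, f (x i) else 0) =
      (∑ b with P b, f b) ^ #S * (∑ b, f b) ^ #Sᶜ := by
  calc ∑ x : ι → β, (if ∀ i ∈ S, P (x i) then ∏ i, f (x i) else 0)
      = ∑ x : ι → β, ∏ i, (if i ∈ S → P (x i) then f (x i) else 0) := by
        refine Finset.sum_congr rfl fun x _ => ?_
        rw [Fintype.prod_ite_zero]
        congr
    _ = ∏ i, ∑ b, (if i ∈ S → P b then f b else 0) :=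
        (Fintype.prod_sum fun i b => if i ∈ S → P b then f b else 0).symm
    _ = ∏ i, (if i ∈ S then ∑ b with P b, f b else ∑ b, f b) :=
        Finset.prod_congr rfl fun i _ => by by_cases hi : i ∈ S <;> simp [hi, sum_filter]
    _ = _ := by rw [prod_ite]; simp [filter_notMem_eq_sdiff, compl_eq_univ_sdiff]

theorem Fintype.sum_sum_ite_not {α β M : Type*} [Fintype α] [Fintype β] [AddCommGroup M]
    (P : α → β → Prop) [∀ a b, Decidable (P a b)] (f : α → β → M) :
    ∑ a, ∑ b, (if ¬P a b then f a b else 0) =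
      ∑ a, ∑ b, f a b - ∑ a, ∑ b, (if P a b then f a b else 0) := by
  simp only [← Finset.sum_sub_distrib]
  congr! 2 with a _ b
  split_ifs <;> simp

section Counting

variable {F : Type*} [Field F] [Fintype F]

theorem Matrix.card_det_ne_zero (n : ℕ) :
    Nat.card {A : Matrix (Fin n) (Fin n) F // A.det ≠ 0} =
      ∏ i : Fin n, (Fintype.card F ^ n - Fintype.card F ^ (i : ℕ)) := by
  let e : {A : Matrix (Fin n) (Fin n) F // A.det ≠ 0} ≃ GL (Fin n) F :=
    { toFun A := .mkOfDetNeZero A.1 A.2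
      invFun g := ⟨g, g.det_ne_zero⟩
      left_inv _ := rfl
      right_inv _ := by ext; rfl }
  rw [Nat.card_congr e, Matrix.card_GL_field]

def finFourEquivMatrix : (Fin 4 → F) ≃ Matrix (Fin 2) (Fin 2) F where
  toFun u := !![u 0, u 1; u 2, u 3]
  invFun A := ![A 0 0, A 0 1, A 1 0, A 1 1]
  left_inv u := by ext i; fin_cases i <;> rfl
  right_inv A := by ext i j; fin_cases i <;> fin_cases j <;> rfl

open Classical in
theorem sum_ite_det_ne_zero :
    ∑ u : Fin 4 → F, (if u 0 * u 3 - u 1 * u 2 ≠ 0 then (1 : ℝ) else 0) =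
      ((Fintype.card F : ℝ) ^ 2 - 1) * ((Fintype.card F : ℝ) ^ 2 - Fintype.card F) := by
  have hq : 1 ≤ Fintype.card F := Fintype.card_pos
  have hdet (A : Matrix (Fin 2) (Fin 2) F) :
      finFourEquivMatrix.symm A 0 * finFourEquivMatrix.symm A 3 -
        finFourEquivMatrix.symm A 1 * finFourEquivMatrix.symm A 2 = A.det := by
    simp [finFourEquivMatrix, Matrix.det_fin_two]
  rw [← finFourEquivMatrix.symm.sum_comp]
  simp only [hdet, sum_boole]
  rw [← Fintype.card_subtype, ← Nat.card_eq_fintype_card, Matrix.card_det_ne_zero,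
    Fin.prod_univ_two]
  simp only [Fin.val_zero, Fin.val_one, pow_zero, pow_one]
  push_cast [Nat.one_le_pow _ _ hq, Nat.le_self_pow two_ne_zero _]
  ring

open Classical in
theorem sum_ite_Ft1t_coeffs_ne_zero :
    ∑ v : Fin 10 → F, (if v 0 * v 3 - v 1 * v 2 ≠ 0 ∧ v 4 ≠ 0 ∧ v 7 ≠ 0 ∧ v 8 ≠ 0 ∧ v 9 ≠ 0
        then (1 : ℝ) else 0) =
      ((Fintype.card F : ℝ) ^ 2 - 1) * ((Fintype.card F : ℝ) ^ 2 - Fintype.card F) *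
        ((Fintype.card F : ℝ) - 1) ^ 4 * (Fintype.card F : ℝ) ^ 2 := by
  set q := (Fintype.card F : ℝ)
  calc _ = ∑ u : Fin 4 → F, ∑ w : Fin 6 → F, (if u 0 * u 3 - u 1 * u 2 ≠ 0 then (1 : ℝ) else 0) *
        (if ∀ i ∈ ({0, 3, 4, 5} : Finset (Fin 6)), w i ≠ 0 then ∏ _ : Fin 6, (1 : ℝ) else 0) := by
        rw [← (Fin.appendEquiv 4 6).sum_comp, Fintype.sum_prod_type]
        refine sum_congr rfl fun u _ => sum_congr rfl fun w _ => ?_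
        rw [ite_zero_mul_ite_zero, prod_const_one, mul_one]
        simp only [Finset.mem_insert, Finset.mem_singleton, forall_eq_or_imp, forall_eq]
        rfl
    _ = (q ^ 2 - 1) * (q ^ 2 - q) * ((q - 1) ^ 4 * q ^ 2) := by
        rw [← Fintype.sum_mul_sum, sum_ite_det_ne_zero]
        congr 1
        refine (Fintype.sum_pi_ite_forall_mem ({0, 3, 4, 5} : Finset (Fin 6)) (· ≠ (0 : F))
          fun _ => (1 : ℝ)).trans ?_
        have hS : #({0, 3, 4, 5} : Finset (Fin 6)) = 4 ∧ #({0, 3, 4, 5} : Finset (Fin 6))ᶜ = 2 := by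
          decide
        rw [hS.1, hS.2]
        simp [filter_ne', Nat.cast_sub Fintype.card_pos, q]
    _ = _ := by ring

end Counting

section Weights

variable {ι : Type*} [Fintype ι] [DecidableEq ι] (p : ℝ)

theorem sum_prod_bernoulli : ∑ e : ι → Bool, ∏ i, (if e i then 1 - p else p) = 1 :=
  (Fintype.prod_sum fun (_ : ι) (b : Bool) => if b then 1 - p else p).symm.trans (by simp)

theorem sum_sum_uniform_mul_prod_bernoulli (β : Type*) [Fintype β] [Nonempty β] (n : ℕ) :
    ∑ _v : Fin n → β, ∑ e : ι → Bool,
      1 / (Fintype.card β : ℝ) ^ n * ∏ i, (if e i then 1 - p else p) = 1 := by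
  simp [← mul_sum, sum_prod_bernoulli]

theorem sum_ite_forall_mem_prod_bernoulli (S : Finset ι)
    [∀ e : ι → Bool, Decidable (∀ i ∈ S, e i = true)] :
    ∑ e : ι → Bool, (if ∀ i ∈ S, e i = true then ∏ i, (if e i then 1 - p else p) else 0) =
      (1 - p) ^ #S :=
  (Fintype.sum_pi_ite_forall_mem S (· = true) fun b => if b then 1 - p else p).trans
    (by simp [sum_filter])

end Weights

section Ft1t

variable {F : Type*} [Field F]

theorem det_Ft1t (a b c d k13 k14 k47 k78 k25 k57 : F) (e1 e2 e3 e4 e5 e7 e8 : Bool) :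
    (Ft1t a b c d k13 k14 k47 k78 k25 k57 e1 e2 e3 e4 e5 e7 e8).det =
      if e1 && e2 && e3 && e5 && e7 && e8 then k13 * k78 * k25 * k57 * (a * d - b * c)
      else 0 := by
  cases e1 <;> cases e2 <;> cases e3 <;> cases e4 <;> cases e5 <;> cases e7 <;> cases e8 <;>
    simp [Ft1t, f3t, f8t, f7t, f5t, f4t, f2t, f1t, Matrix.det_fin_two_of] <;> ring

theorem isUnit_Ft1t_iff (a b c d k13 k14 k47 k78 k25 k57 : F) (e1 e2 e3 e4 e5 e7 e8 : Bool) :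
    IsUnit (Ft1t a b c d k13 k14 k47 k78 k25 k57 e1 e2 e3 e4 e5 e7 e8) ↔
      (a * d - b * c ≠ 0 ∧ k13 ≠ 0 ∧ k78 ≠ 0 ∧ k25 ≠ 0 ∧ k57 ≠ 0) ∧
        (e1 && e2 && e3 && e5 && e7 && e8) = true := by
  rw [Matrix.isUnit_iff_isUnit_det, isUnit_iff_ne_zero, det_Ft1t]
  by_cases he : (e1 && e2 && e3 && e5 && e7 && e8) = true <;> simp [he, and_comm, and_assoc]

-- As above, the instance deciding `IsUnit` is an argument: the classical one depends on `Fintype F`.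
open Classical in
theorem ite_isUnit_Ft1t_eq (v : Fin 10 → F) (e : Fin 7 → Bool)
    [Decidable (IsUnit (Ft1t (v 0) (v 1) (v 2) (v 3) (v 4) (v 5) (v 6) (v 7) (v 8) (v 9)
      (e 0) (e 1) (e 2) (e 3) (e 4) (e 5) (e 6)))] (c W : ℝ) :
    (if IsUnit (Ft1t (v 0) (v 1) (v 2) (v 3) (v 4) (v 5) (v 6) (v 7) (v 8) (v 9)
        (e 0) (e 1) (e 2) (e 3) (e 4) (e 5) (e 6)) then c * W else 0) =
      c * ((if v 0 * v 3 - v 1 * v 2 ≠ 0 ∧ v 4 ≠ 0 ∧ v 7 ≠ 0 ∧ v 8 ≠ 0 ∧ v 9 ≠ 0 then 1 else 0) *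
        (if ∀ i ∈ ({3}ᶜ : Finset (Fin 7)), e i = true then W else 0)) := by
  have he : (e 0 && e 1 && e 2 && e 4 && e 5 && e 6) = true ↔
      ∀ i ∈ ({3}ᶜ : Finset (Fin 7)), e i = true := by
    simp [Fin.forall_fin_succ, and_assoc]
  simp only [isUnit_Ft1t_iff, he]
  rw [ite_zero_mul_ite_zero, one_mul, mul_ite, mul_zero]

end Ft1t

open Classical in
theorem sum_ite_isUnit_Ft1t_weight (F : Type*) [Field F] [Fintype F] (p : ℝ) :
    (∑ v : Fin 10 → F, ∑ e : Fin 7 → Bool,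
        if IsUnit (Ft1t (v 0) (v 1) (v 2) (v 3) (v 4) (v 5) (v 6) (v 7) (v 8) (v 9)
            (e 0) (e 1) (e 2) (e 3) (e 4) (e 5) (e 6)) then
          (1 / (Fintype.card F : ℝ) ^ 10) * ∏ i : Fin 7, (if e i then 1 - p else p)
        else 0) =
      ((Fintype.card F : ℝ) + 1) * ((Fintype.card F : ℝ) - 1) ^ 6 * (1 - p) ^ 6 /
        (Fintype.card F : ℝ) ^ 7 := by
  have hq : (Fintype.card F : ℝ) ≠ 0 := Nat.cast_ne_zero.mpr Fintype.card_ne_zero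
  simp only [ite_isUnit_Ft1t_eq, ← mul_sum, ← sum_mul]
  rw [sum_ite_Ft1t_coeffs_ne_zero, sum_ite_forall_mem_prod_bernoulli, card_compl, card_singleton,
    Fintype.card_fin]
  field_simp
  ring

open Classical in
theorem butterfly_erased_sink_t1_failure_probability_general
    (F : Type*) [Field F] [Fintype F] (q : ℕ) (hq : Fintype.card F = q)
    (p : ℝ) :
    (∑ v : Fin 10 → F, ∑ e : Fin 7 → Bool,
        if IsUnit (Ft1t (v 0) (v 1) (v 2) (v 3) (v 4) (v 5) (v 6) (v 7) (v 8) (v 9)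
            (e 0) (e 1) (e 2) (e 3) (e 4) (e 5) (e 6)) then
          (1 / (q : ℝ) ^ 10) * ∏ i : Fin 7, (if e i then 1 - p else p)
        else 0) =
      ((q : ℝ) + 1) * ((q : ℝ) - 1) ^ 6 * (1 - p) ^ 6 / (q : ℝ) ^ 7 ∧
    (∑ v : Fin 10 → F, ∑ e : Fin 7 → Bool,
        if ¬ IsUnit (Ft1t (v 0) (v 1) (v 2) (v 3) (v 4) (v 5) (v 6) (v 7) (v 8) (v 9)
            (e 0) (e 1) (e 2) (e 3) (e 4) (e 5) (e 6)) then
          (1 / (q : ℝ) ^ 10) * ∏ i : Fin 7, (if e i then 1 - p else p)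
        else 0) =
      1 - ((q : ℝ) + 1) * ((q : ℝ) - 1) ^ 6 * (1 - p) ^ 6 / (q : ℝ) ^ 7 := by
  subst hq
  refine ⟨sum_ite_isUnit_Ft1t_weight F p, ?_⟩
  rw [Fintype.sum_sum_ite_not, sum_ite_isUnit_Ft1t_weight, sum_sum_uniform_mul_prod_bernoulli]

open Classical in
theorem butterfly_erased_sink_t1_failure_probability
    (F : Type*) [Field F] [Fintype F] (q : ℕ) (hq : Fintype.card F = q) (hq2 : 2 ≤ q)
    (p : ℝ) (hp : p ∈ Set.Icc (0 : ℝ) 1) :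
    (∑ v : Fin 10 → F, ∑ e : Fin 7 → Bool,
        if IsUnit (Ft1t (v 0) (v 1) (v 2) (v 3) (v 4) (v 5) (v 6) (v 7) (v 8) (v 9)
            (e 0) (e 1) (e 2) (e 3) (e 4) (e 5) (e 6)) then
          (1 / (q : ℝ) ^ 10) * ∏ i : Fin 7, (if e i then 1 - p else p)
        else 0) =
      ((q : ℝ) + 1) * ((q : ℝ) - 1) ^ 6 * (1 - p) ^ 6 / (q : ℝ) ^ 7 ∧
    (∑ v : Fin 10 → F, ∑ e : Fin 7 → Bool,
        if ¬ IsUnit (Ft1t (v 0) (v 1) (v 2) (v 3) (v 4) (v 5) (v 6) (v 7) (v 8) (v 9)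
            (e 0) (e 1) (e 2) (e 3) (e 4) (e 5) (e 6)) then
          (1 / (q : ℝ) ^ 10) * ∏ i : Fin 7, (if e i then 1 - p else p)
        else 0) =
      1 - ((q : ℝ) + 1) * ((q : ℝ) - 1) ^ 6 * (1 - p) ^ 6 / (q : ℝ) ^ 7 :=
  butterfly_erased_sink_t1_failure_probability_general F q hq p
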